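/- There exist universal constants c > 0 and C > 0 such that for every integer m ≥ 1 and every nonzero x ∈ ℤ_2^m, the expected hitting time of the random walk on ℤ_2^m generated by the uniform distribution on the standard generators satisfies c · 2^m ≤ E_0[τ_x] ≤ C · 2^m. -/

import Mathlib

open scoped ENNReal Classical
open Finset

/-- Position of the random walk started at `x` after increments `w 0, w 1, ...`:
`X_0 = x`, `X_{s+1} = w s + X_s`. -/
def walkPos {G : Type*} [AddGroup G] (x : G) (w : ℕ → G) : ℕ → G
  | 0 => x
  | s + 1 => w s + walkPos x w s

/-- Probability that the random walk generated by `p`, started at `x`,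
has not visited `g` at any time `≤ t` (i.e. `P_x(τ_g > t)`). -/
noncomputable def hitSurvival {G : Type*} [AddGroup G] [Fintype G]
    (p : G → ℝ≥0∞) (x g : G) (t : ℕ) : ℝ≥0∞ :=
  ∑ w : Fin t → G,
    if ∀ s ≤ t, walkPos x (fun i => if h : i < t then w ⟨i, h⟩ else 0) s ≠ g
    then ∏ i, p (w i) else 0

/-- Expected hitting time `E_x[τ_g] = ∑_{t ≥ 0} P_x(τ_g > t)`. -/
noncomputable def expHit {G : Type*} [AddGroup G] [Fintype G]
    (p : G → ℝ≥0∞) (x g : G) : ℝ≥0∞ :=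
  ∑' t : ℕ, hitSurvival p x g t

section general

variable {G : Type*} [AddGroup G] [Fintype G] (p : G → ℝ≥0∞)

lemma walkPos_congr (x : G) (w w' : ℕ → G) (s : ℕ) (h : ∀ i < s, w i = w' i) :
    walkPos x w s = walkPos x w' s := by
  induction s with
  | zero => rfl
  | succ n ih =>
      show w n + _ = w' n + _
      rw [h n (by omega), ih (fun i hi => h i (by omega))]

lemma walkPos_shift (x : G) (w : ℕ → G) (s : ℕ) :
    walkPos x w (s + 1) = walkPos (w 0 + x) (fun i => w (i + 1)) s := by
  induction s with
  | zero => rfl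
  | succ n ih =>
      show w (n+1) + walkPos x w (n+1) = _ + _
      rw [ih]

lemma hitSurvival_self (g : G) (t : ℕ) : hitSurvival p g g t = 0 := by
  unfold hitSurvival
  refine Finset.sum_eq_zero fun w _ => ?_
  rw [if_neg]
  intro hP
  exact hP 0 (by omega) rfl

lemma hitSurvival_zero (x g : G) (h : x ≠ g) : hitSurvival p x g 0 = 1 := by
  unfold hitSurvival
  rw [Fintype.sum_eq_single (fun i : Fin 0 => (0 : G)) (fun w hw => absurd (funext fun i => i.elim0) hw)]
  rw [if_pos, Finset.prod_of_isEmpty]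
  intro s hs
  interval_cases s
  exact h

lemma hitSurvival_succ (x g : G) (t : ℕ) :
    hitSurvival p x g (t + 1)
      = if x = g then 0 else ∑ a : G, p a * hitSurvival p (a + x) g t := by
  rcases eq_or_ne x g with rfl | hxg
  · rw [if_pos rfl, hitSurvival_self]
  rw [if_neg hxg]
  unfold hitSurvival
  rw [← Equiv.sum_comp (Fin.consEquiv (fun _ : Fin (t+1) => G)) _]
  simp only [Fin.consEquiv_apply]
  rw [Fintype.sum_prod_type]
  refine Finset.sum_congr rfl fun a _ => ?_
  rw [Finset.mul_sum]
  refine Finset.sum_congr rfl fun w _ => ?_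
  have hc0 : ∀ h : (0:ℕ) < t + 1, (Fin.cons a w : ∀ _ : Fin (t+1), G) ⟨0, h⟩ = a :=
    fun h => rfl
  have hcsucc : (fun i : ℕ => (if h : i + 1 < t + 1 then
        (Fin.cons a w : ∀ _ : Fin (t+1), G) ⟨i+1, h⟩ else 0))
      = fun i : ℕ => if h : i < t then w ⟨i, h⟩ else 0 := by
    funext i
    by_cases hi : i < t
    · rw [dif_pos (by omega), dif_pos hi]
      rw [show (⟨i+1, by omega⟩ : Fin (t+1)) = Fin.succ ⟨i, hi⟩ from rfl, Fin.cons_succ]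
    · rw [dif_neg (by omega), dif_neg hi]
  have hiff : (∀ s ≤ t + 1, walkPos x
        (fun i => if h : i < t + 1 then (Fin.cons a w : ∀ _ : Fin (t+1), G) ⟨i, h⟩ else 0) s ≠ g)
      ↔ (∀ s ≤ t, walkPos (a + x) (fun i => if h : i < t then w ⟨i, h⟩ else 0) s ≠ g) := by
    constructor
    · intro H s hs
      have := H (s+1) (by omega)
      rwa [walkPos_shift, dif_pos (by omega), hc0, hcsucc] at this
    · intro H s hs
      match s, hs with
      | 0, _ => exact hxg
      | (s+1), hs =>
          rw [walkPos_shift, dif_pos (by omega), hc0, hcsucc]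
          exact H s (by omega)
  rw [if_congr hiff rfl rfl]
  by_cases hQQ : ∀ s ≤ t, walkPos (a + x) (fun i => if h : i < t then w ⟨i, h⟩ else 0) s ≠ g
  · rw [if_pos hQQ, if_pos hQQ]
    rw [Fin.prod_univ_succ]
    simp [Fin.cons_succ, Fin.cons_zero]
  · rw [if_neg hQQ, if_neg hQQ, mul_zero]

lemma expHit_self (g : G) : expHit p g g = 0 := by
  unfold expHit
  rw [tsum_congr (fun t => hitSurvival_self p g t), tsum_zero]

set_option maxHeartbeats 1000000 in
lemma expHit_rec (x g : G) (hxg : x ≠ g) :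
    expHit p x g = 1 + ∑ a : G, p a * expHit p (a + x) g := by
  unfold expHit
  rw [tsum_eq_zero_add' ENNReal.summable, hitSurvival_zero p x g hxg]
  congr 1
  have : ∀ t : ℕ, hitSurvival p x g (t + 1) = ∑ a : G, p a * hitSurvival p (a + x) g t := by
    intro t; rw [hitSurvival_succ, if_neg hxg]
  rw [tsum_congr this, Summable.tsum_finsetSum (fun a _ => ENNReal.summable)]
  exact Finset.sum_congr rfl fun a _ => ENNReal.tsum_mul_left

lemma expHit_le_of (g : G) (H : G → ℝ≥0∞) (hg : H g = 0)
    (hrec : ∀ y, y ≠ g → 1 + ∑ a : G, p a * H (a + y) ≤ H y) :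
    ∀ y, expHit p y g ≤ H y := by
  have key : ∀ n y, ∑ t ∈ range n, hitSurvival p y g t ≤ H y := by
    intro n
    induction n with
    | zero => intro y; simp
    | succ n ih =>
        intro y
        rcases eq_or_ne y g with rfl | hy
        · simp [hitSurvival_self, hg]
        rw [Finset.sum_range_succ']
        simp only [hitSurvival_succ p y g _, if_neg hy, hitSurvival_zero p y g hy]
        rw [Finset.sum_comm]
        calc (∑ a : G, ∑ t ∈ range n, p a * hitSurvival p (a + y) g t) + 1
            ≤ (∑ a : G, p a * H (a + y)) + 1 := by
              gcongr with a _
              rw [← Finset.mul_sum]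
              exact mul_le_mul_right (ih (a + y)) _
          _ ≤ H y := by rw [add_comm]; exact hrec y hy
  intro y
  unfold expHit
  rw [ENNReal.tsum_eq_iSup_nat]
  exact iSup_le fun n => key n y

end general

section cube

variable {m : ℕ}

lemma zmod2_cases : ∀ a : ZMod 2, a = 0 ∨ a = 1 := by decide
lemma zmod2_add_self : ∀ a : ZMod 2, a + a = 0 := by decide
lemma zmod2_flip : ∀ a b : ZMod 2, a ≠ b → 1 + a = b := by decide
lemma zmod2_add_zero_eq_one : ∀ a b : ZMod 2, a + b = 0 → b = a := by decide
lemma zmod2_succ_eq_one : ∀ a : ZMod 2, (a + 1 = 1 ↔ ¬ (a = 1)) := by decide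
lemma zmod2_not_one : ∀ a : ZMod 2, ¬ (a = 1) → a = 0 := by decide

def wt (z : Fin m → ZMod 2) : ℕ := (univ.filter fun i => z i = 1).card

noncomputable def dot (z v : Fin m → ZMod 2) : ZMod 2 := ∑ i, z i * v i

noncomputable def HH (m : ℕ) (x : Fin m → ZMod 2) (y : Fin m → ZMod 2) : ℝ≥0∞ :=
  ∑ z ∈ univ.filter (fun z : Fin m → ZMod 2 => dot z (x + y) = 1), (m : ℝ≥0∞) / (wt z)

noncomputable def pp (m : ℕ) : (Fin m → ZMod 2) → ℝ≥0∞ :=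
  fun y => if ∃ i, y = Pi.single i 1 then (m : ℝ≥0∞)⁻¹ else 0

lemma dot_add_right (z v u : Fin m → ZMod 2) : dot z (v + u) = dot z v + dot z u := by
  unfold dot
  rw [← Finset.sum_add_distrib]
  exact Finset.sum_congr rfl fun i _ => by rw [Pi.add_apply, mul_add]

lemma dot_zero_right (z : Fin m → ZMod 2) : dot z 0 = 0 := by unfold dot; simp

lemma dot_zero_left (v : Fin m → ZMod 2) : dot 0 v = 0 := by unfold dot; simp

lemma dot_single_right (z : Fin m → ZMod 2) (i : Fin m) : dot z (Pi.single i 1) = z i := by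
  unfold dot
  rw [Finset.sum_eq_single i]
  · rw [Pi.single_eq_same, mul_one]
  · intro j _ hj
    rw [Pi.single_eq_of_ne hj, mul_zero]
  · intro h; exact absurd (mem_univ i) h

lemma wt_le (z : Fin m → ZMod 2) : wt z ≤ m := by
  unfold wt
  calc (univ.filter fun i => z i = 1).card ≤ (univ : Finset (Fin m)).card := card_filter_le _ _
    _ = m := by simp

lemma wt_eq_zero_iff (z : Fin m → ZMod 2) : wt z = 0 ↔ z = 0 := by
  unfold wt
  rw [Finset.card_eq_zero, Finset.filter_eq_empty_iff]
  constructor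
  · intro h
    funext i
    exact zmod2_not_one _ (h (mem_univ i))
  · intro h i _
    rw [h]
    intro h1
    exact one_ne_zero h1.symm

lemma dot_one_ne_zero {z v : Fin m → ZMod 2} (h : dot z v = 1) : z ≠ 0 := by
  intro h0
  rw [h0, dot_zero_left] at h
  exact one_ne_zero h.symm

lemma card_cube : Fintype.card (Fin m → ZMod 2) = 2 ^ m := by
  rw [Fintype.card_fun]
  simp

lemma card_dot_fiber_eq (v : Fin m → ZMod 2) (hv : v ≠ 0) :
    (univ.filter fun z : Fin m → ZMod 2 => dot z v = 1).card
      = (univ.filter fun z : Fin m → ZMod 2 => ¬ (dot z v = 1)).card := by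
  obtain ⟨i0, hi0⟩ : ∃ i, v i ≠ 0 := by
    by_contra h
    push_neg at h
    exact hv (funext h)
  have hv1 : v i0 = 1 := (zmod2_cases (v i0)).resolve_left hi0
  have hdots : ∀ z : Fin m → ZMod 2, dot (z + Pi.single i0 1) v = dot z v + 1 := by
    intro z
    have : ∀ j, (z + (Pi.single i0 1 : Fin m → ZMod 2)) j * v j
        = z j * v j + (Pi.single i0 1 : Fin m → ZMod 2) j * v j := by
      intro j; rw [Pi.add_apply, add_mul]
    unfold dot
    rw [Finset.sum_congr rfl fun j _ => this j, Finset.sum_add_distrib]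
    congr 1
    have : ∀ j, (Pi.single i0 1 : Fin m → ZMod 2) j * v j = (Pi.single i0 (v i0) : Fin m → ZMod 2) j := by
      intro j
      rcases eq_or_ne j i0 with rfl | hj
      · rw [Pi.single_eq_same, Pi.single_eq_same, one_mul]
      · rw [Pi.single_eq_of_ne hj, Pi.single_eq_of_ne hj, zero_mul]
    rw [Finset.sum_congr rfl fun j _ => this j, Finset.sum_pi_single']
    simp [hv1]
  apply Finset.card_nbij' (fun z => z + Pi.single i0 1) (fun z => z + Pi.single i0 1)
  · intro a ha
    simp only [Finset.mem_coe, mem_filter, mem_univ, true_and] at ha ⊢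
    rw [hdots, ha]
    decide
  · intro a ha
    simp only [Finset.mem_coe, mem_filter, mem_univ, true_and] at ha ⊢
    rw [hdots]
    rcases zmod2_cases (dot a v) with h0 | h1
    · rw [h0]; decide
    · exact absurd h1 ha
  · intro a _
    funext j
    beta_reduce
    rw [Pi.add_apply, Pi.add_apply, add_assoc, zmod2_add_self, add_zero]
  · intro a _
    funext j
    beta_reduce
    rw [Pi.add_apply, Pi.add_apply, add_assoc, zmod2_add_self, add_zero]

lemma card_dot_one (hm : m ≠ 0) (v : Fin m → ZMod 2) (hv : v ≠ 0) :
    (univ.filter fun z : Fin m → ZMod 2 => dot z v = 1).card = 2 ^ (m - 1) := by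
  have h1 := card_dot_fiber_eq v hv
  have h2 := Finset.card_filter_add_card_filter_not
    (s := (univ : Finset (Fin m → ZMod 2))) (p := fun z => dot z v = 1)
  rw [card_univ, card_cube] at h2
  have hpow : 2 ^ m = 2 ^ (m - 1) * 2 := by
    rw [← pow_succ]
    congr 1
    omega
  omega

lemma card_dot_not_one (hm : m ≠ 0) (v : Fin m → ZMod 2) (hv : v ≠ 0) :
    (univ.filter fun z : Fin m → ZMod 2 => ¬ (dot z v = 1)).card = 2 ^ (m - 1) := by
  rw [← card_dot_fiber_eq v hv, card_dot_one hm v hv]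

end cube

section harmonic

variable {m : ℕ}

lemma single_inj (i j : Fin m) (h : (Pi.single i 1 : Fin m → ZMod 2) = Pi.single j 1) :
    i = j := by
  by_contra hij
  have h2 := congr_fun h i
  rw [Pi.single_eq_same, Pi.single_eq_of_ne hij] at h2
  exact one_ne_zero h2

lemma sum_pp_mul (F : (Fin m → ZMod 2) → ℝ≥0∞) :
    ∑ a : Fin m → ZMod 2, pp m a * F a
      = ∑ i : Fin m, (m : ℝ≥0∞)⁻¹ * F (Pi.single i 1) := by
  have step1 : ∑ a : Fin m → ZMod 2, pp m a * F a
      = ∑ a ∈ univ.filter (fun a : Fin m → ZMod 2 => ∃ i, a = Pi.single i 1),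
          (m : ℝ≥0∞)⁻¹ * F a := by
    rw [Finset.sum_filter]
    refine Finset.sum_congr rfl fun a _ => ?_
    unfold pp
    rw [ite_mul, zero_mul]
  rw [step1]
  have step2 : univ.filter (fun a : Fin m → ZMod 2 => ∃ i, a = Pi.single i 1)
      = univ.image (fun i : Fin m => (Pi.single i 1 : Fin m → ZMod 2)) := by
    ext a
    simp only [mem_filter, mem_image, mem_univ, true_and]
    exact exists_congr fun i => eq_comm
  rw [step2, Finset.sum_image (fun i _ j _ h => single_inj i j h)]

lemma HH_self (x : Fin m → ZMod 2) : HH m x x = 0 := by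
  unfold HH
  rw [Finset.filter_false_of_mem, Finset.sum_empty]
  intro z _
  rw [show x + x = 0 from funext fun i => zmod2_add_self (x i), dot_zero_right]
  intro h
  exact one_ne_zero h.symm

lemma HH_ne_top (x y : Fin m → ZMod 2) : HH m x y ≠ ∞ := by
  unfold HH
  rw [← lt_top_iff_ne_top]
  refine ENNReal.sum_lt_top.mpr fun z hz => ?_
  have hz0 : z ≠ 0 := dot_one_ne_zero (mem_filter.mp hz).2
  have hwt : wt z ≠ 0 := fun h => hz0 ((wt_eq_zero_iff z).mp h)
  exact ENNReal.div_lt_top (by simp) (by exact_mod_cast hwt)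

lemma HH_rec (hm : m ≠ 0) (x y : Fin m → ZMod 2) (hy : y ≠ x) :
    HH m x y = 1 + ∑ a : Fin m → ZMod 2, pp m a * HH m x (a + y) := by
  rw [sum_pp_mul]
  set v := x + y with hv
  have hv0 : v ≠ 0 := by
    intro h
    apply hy
    funext i
    rw [hv] at h
    have h2 := congr_fun h i
    rw [Pi.add_apply, Pi.zero_apply] at h2
    exact zmod2_add_zero_eq_one _ _ h2
  -- rewrite each HH m x (single i 1 + y)
  have key : ∀ i : Fin m, HH m x (Pi.single i 1 + y)
      = ∑ z ∈ univ.filter (fun z : Fin m → ZMod 2 => z i + dot z v = 1),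
          (m : ℝ≥0∞) / (wt z) := by
    intro i
    unfold HH
    congr 1
    ext z
    simp only [mem_filter, mem_univ, true_and]
    rw [show x + (Pi.single i 1 + y) = Pi.single i 1 + v from by rw [hv]; abel,
        dot_add_right, dot_single_right, add_comm (z i) (dot z v)]
  have hrhs : ∑ i : Fin m, (m : ℝ≥0∞)⁻¹ * HH m x (Pi.single i 1 + y)
      = ∑ z : Fin m → ZMod 2,
          ((univ.filter fun i : Fin m => z i + dot z v = 1).card : ℝ≥0∞)
            * ((m : ℝ≥0∞)⁻¹ * ((m : ℝ≥0∞) / (wt z))) := by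
    rw [Finset.sum_congr rfl fun i _ => by rw [key i]]
    have : ∀ i : Fin m, (m : ℝ≥0∞)⁻¹
          * ∑ z ∈ univ.filter (fun z : Fin m → ZMod 2 => z i + dot z v = 1),
              (m : ℝ≥0∞) / (wt z)
        = ∑ z : Fin m → ZMod 2,
            if z i + dot z v = 1 then (m : ℝ≥0∞)⁻¹ * ((m : ℝ≥0∞) / (wt z)) else 0 := by
      intro i
      rw [Finset.mul_sum, ← Finset.sum_filter]
    rw [Finset.sum_congr rfl fun i _ => this i, Finset.sum_comm]
    refine Finset.sum_congr rfl fun z _ => ?_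
    rw [← Finset.sum_filter, Finset.sum_const, nsmul_eq_mul]
  rw [hrhs]
  -- split the z-sum according to dot z v = 1 or not
  rw [← Finset.sum_filter_add_sum_filter_not univ (fun z : Fin m → ZMod 2 => dot z v = 1)]
  -- the (dot = 1) part
  have hA : ∀ z ∈ univ.filter (fun z : Fin m → ZMod 2 => dot z v = 1),
      ((univ.filter fun i : Fin m => z i + dot z v = 1).card : ℝ≥0∞)
          * ((m : ℝ≥0∞)⁻¹ * ((m : ℝ≥0∞) / (wt z)))
        = ((m - wt z : ℕ) : ℝ≥0∞) / (wt z) := by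
    intro z hz
    have hdz : dot z v = 1 := (mem_filter.mp hz).2
    have hcard : (univ.filter fun i : Fin m => z i + dot z v = 1).card = m - wt z := by
      have : (univ.filter fun i : Fin m => z i + dot z v = 1)
          = univ.filter fun i : Fin m => ¬ (z i = 1) := by
        ext i
        simp only [mem_filter, mem_univ, true_and, hdz]
        exact zmod2_succ_eq_one (z i)
      rw [this]
      have h2 := Finset.card_filter_add_card_filter_not
        (s := (univ : Finset (Fin m))) (p := fun i => z i = 1)
      rw [card_univ, Fintype.card_fin] at h2
      unfold wt
      omega
    rw [hcard]
    congr 1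
    rw [← mul_div_assoc, ENNReal.inv_mul_cancel (by exact_mod_cast hm) (by simp), one_div]
  -- the (dot ≠ 1) part
  have hB : ∀ z ∈ univ.filter (fun z : Fin m → ZMod 2 => ¬ (dot z v = 1)),
      ((univ.filter fun i : Fin m => z i + dot z v = 1).card : ℝ≥0∞)
          * ((m : ℝ≥0∞)⁻¹ * ((m : ℝ≥0∞) / (wt z)))
        = if z = 0 then 0 else 1 := by
    intro z hz
    have hdz : dot z v = 0 := zmod2_not_one _ (mem_filter.mp hz).2
    have hcard : (univ.filter fun i : Fin m => z i + dot z v = 1).card = wt z := by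
      unfold wt
      congr 1
      ext i
      simp [hdz]
    rw [hcard]
    rcases eq_or_ne z 0 with rfl | hz0
    · rw [if_pos rfl]
      have : wt (0 : Fin m → ZMod 2) = 0 := (wt_eq_zero_iff 0).mpr rfl
      rw [this]
      simp
    · rw [if_neg hz0]
      have hwt : (wt z : ℝ≥0∞) ≠ 0 := by
        rw [Ne, Nat.cast_eq_zero]
        exact fun h => hz0 ((wt_eq_zero_iff z).mp h)
      rw [← mul_div_assoc, ENNReal.inv_mul_cancel (by exact_mod_cast hm) (by simp), one_div,
          ENNReal.mul_inv_cancel hwt (by simp)]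
  rw [Finset.sum_congr rfl hA, Finset.sum_congr rfl hB]
  -- compute the constant part
  have h0mem : (0 : Fin m → ZMod 2) ∈ univ.filter (fun z : Fin m → ZMod 2 => ¬ (dot z v = 1)) := by
    simp only [mem_filter, mem_univ, true_and, dot_zero_left]
    intro h
    exact one_ne_zero h.symm
  have hBsum : ∑ z ∈ univ.filter (fun z : Fin m → ZMod 2 => ¬ (dot z v = 1)),
      (if z = 0 then (0:ℝ≥0∞) else 1) = ((2 ^ (m-1) - 1 : ℕ) : ℝ≥0∞) := by
    rw [← Finset.sum_erase_add _ _ h0mem, if_pos rfl, add_zero]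
    rw [Finset.sum_congr rfl (fun z hz => if_neg (Finset.ne_of_mem_erase hz)), Finset.sum_const,
        Finset.card_erase_of_mem h0mem, card_dot_not_one hm v hv0]
    simp
  rw [hBsum]
  -- compute the left side
  unfold HH
  rw [← hv]
  have hL : ∀ z ∈ univ.filter (fun z : Fin m → ZMod 2 => dot z v = 1),
      (m : ℝ≥0∞) / (wt z) = ((m - wt z : ℕ) : ℝ≥0∞) / (wt z) + 1 := by
    intro z hz
    have hz0 : z ≠ 0 := dot_one_ne_zero (mem_filter.mp hz).2
    have hwtn : wt z ≠ 0 := fun h => hz0 ((wt_eq_zero_iff z).mp h)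
    have hwt : (wt z : ℝ≥0∞) ≠ 0 := by rwa [Ne, Nat.cast_eq_zero]
    rw [show (1:ℝ≥0∞) = (wt z : ℝ≥0∞) / (wt z : ℝ≥0∞) from (ENNReal.div_self hwt (by simp)).symm,
        ENNReal.div_add_div_same, ← Nat.cast_add, Nat.sub_add_cancel (wt_le z)]
  rw [Finset.sum_congr rfl hL, Finset.sum_add_distrib, Finset.sum_const,
      card_dot_one hm v hv0, nsmul_eq_mul, mul_one]
  have hfin : (1:ℝ≥0∞) + ((2 ^ (m-1) - 1 : ℕ) : ℝ≥0∞) = ((2 ^ (m-1) : ℕ) : ℝ≥0∞) := by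
    rw [← Nat.cast_one, ← Nat.cast_add]
    congr 1
    have : 1 ≤ 2 ^ (m-1) := Nat.one_le_two_pow
    omega
  rw [add_comm (∑ z ∈ univ.filter (fun z : Fin m → ZMod 2 => dot z v = 1),
        ((m - wt z : ℕ) : ℝ≥0∞) / (wt z)) (((2:ℕ) ^ (m-1) - 1 : ℕ) : ℝ≥0∞)]
  rw [← add_assoc, hfin]
  rw [add_comm]

end harmonic

section maxprinciple

variable {m : ℕ}

lemma expHit_le_HH (hm : m ≠ 0) (x y : Fin m → ZMod 2) :
    expHit (pp m) y x ≤ HH m x y :=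
  expHit_le_of (pp m) x (HH m x) (HH_self x)
    (fun y hy => le_of_eq (HH_rec hm x y hy).symm) y

lemma toReal_rec (hm : m ≠ 0) (f : (Fin m → ZMod 2) → ℝ≥0∞) (hfin : ∀ y, f y ≠ ∞)
    (y : Fin m → ZMod 2) (hrecy : f y = 1 + ∑ a : Fin m → ZMod 2, pp m a * f (a + y)) :
    (f y).toReal = 1 + (m:ℝ)⁻¹ * ∑ i : Fin m, (f (Pi.single i 1 + y)).toReal := by
  rw [hrecy, sum_pp_mul]
  have hterm : ∀ i : Fin m, ((m : ℝ≥0∞)⁻¹ * f (Pi.single i 1 + y)) ≠ ∞ :=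
    fun i => ENNReal.mul_ne_top (ENNReal.inv_ne_top.mpr (by exact_mod_cast hm)) (hfin _)
  have hsum : (∑ i : Fin m, (m : ℝ≥0∞)⁻¹ * f (Pi.single i 1 + y)) ≠ ∞ := by
    rw [← lt_top_iff_ne_top]
    exact ENNReal.sum_lt_top.mpr fun i _ => lt_top_iff_ne_top.mpr (hterm i)
  rw [ENNReal.toReal_add ENNReal.one_ne_top hsum, ENNReal.toReal_one,
      ENNReal.toReal_sum (fun i _ => hterm i)]
  congr 1
  rw [Finset.mul_sum]
  refine Finset.sum_congr rfl fun i _ => ?_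
  rw [ENNReal.toReal_mul, ENNReal.toReal_inv, ENNReal.toReal_natCast]

lemma expHit_eq_HH (hm : m ≠ 0) (x y0 : Fin m → ZMod 2) :
    expHit (pp m) y0 x = HH m x y0 := by
  have hle : ∀ y, expHit (pp m) y x ≤ HH m x y := fun y => expHit_le_HH hm x y
  have hne : ∀ y, expHit (pp m) y x ≠ ∞ := fun y => ne_top_of_le_ne_top (HH_ne_top x y) (hle y)
  set D : (Fin m → ZMod 2) → ℝ :=
    fun y => (HH m x y).toReal - (expHit (pp m) y x).toReal with hD
  have hDnn : ∀ y, 0 ≤ D y :=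
    fun y => sub_nonneg.mpr (ENNReal.toReal_mono (HH_ne_top x y) (hle y))
  have hDx : D x = 0 := by
    simp only [hD, HH_self, expHit_self]
    simp
  have hharm : ∀ y, y ≠ x → (m:ℝ) * D y = ∑ i : Fin m, D (Pi.single i 1 + y) := by
    intro y hy
    have rH := toReal_rec hm (HH m x) (HH_ne_top x) y (HH_rec hm x y hy)
    have rh := toReal_rec hm (fun u => expHit (pp m) u x) hne y (expHit_rec (pp m) y x hy)
    have hstep : D y = (m:ℝ)⁻¹ * ∑ i : Fin m, D (Pi.single i 1 + y) := by
      simp only [hD]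
      rw [rH, rh, Finset.sum_sub_distrib]
      ring
    rw [hstep, ← mul_assoc, mul_inv_cancel₀ (by exact_mod_cast hm), one_mul]
  obtain ⟨ymax, -, hmax⟩ :=
    Finset.exists_max_image (univ : Finset (Fin m → ZMod 2)) D ⟨x, mem_univ x⟩
  have claim : ∀ k : ℕ, ∀ c : Fin m → ZMod 2,
      (univ.filter fun i => c i ≠ x i).card = k → D c = D ymax → D ymax = 0 := by
    intro k
    induction k with
    | zero =>
        intro c hc hDc
        have hcx : c = x := by
          funext i
          by_contra hi
          have hmem : i ∈ univ.filter (fun i => c i ≠ x i) :=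
            mem_filter.mpr ⟨mem_univ i, hi⟩
          rw [Finset.card_eq_zero] at hc
          rw [hc] at hmem
          exact absurd hmem (notMem_empty i)
        rw [← hDc, hcx, hDx]
    | succ k ih =>
        intro c hc hDc
        have hcx : c ≠ x := by
          intro h
          rw [h] at hc
          simp at hc
        have hsum := hharm c hcx
        rw [hDc] at hsum
        have hallmax : ∀ i : Fin m, D (Pi.single i 1 + c) = D ymax := by
          by_contra hcon
          push_neg at hcon
          obtain ⟨j, hj⟩ := hcon
          have hjlt : D (Pi.single j 1 + c) < D ymax :=
            lt_of_le_of_ne (hmax _ (mem_univ _)) hj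
          have hlt : ∑ i : Fin m, D (Pi.single i 1 + c)
              < ∑ _i : Fin m, D ymax :=
            Finset.sum_lt_sum (fun i _ => hmax _ (mem_univ _)) ⟨j, mem_univ j, hjlt⟩
          rw [Finset.sum_const, card_univ, Fintype.card_fin, nsmul_eq_mul] at hlt
          rw [← hsum] at hlt
          exact lt_irrefl _ hlt
        obtain ⟨i0, hi0mem⟩ :
            (univ.filter fun i => c i ≠ x i).Nonempty := by
          rw [← Finset.card_pos, hc]
          omega
        have hi0 : c i0 ≠ x i0 := (mem_filter.mp hi0mem).2
        set c' : Fin m → ZMod 2 := Pi.single i0 1 + c with hc'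
        have hfil : (univ.filter fun i => c' i ≠ x i)
            = (univ.filter fun i => c i ≠ x i).erase i0 := by
          ext j
          simp only [Finset.mem_erase, mem_filter, mem_univ, true_and]
          rcases eq_or_ne j i0 with rfl | hj
          · simp only [hc', Pi.add_apply, Pi.single_eq_same]
            constructor
            · intro h
              exact absurd (zmod2_flip _ _ hi0) h
            · intro h
              exact absurd rfl h.1
          · simp only [hc', Pi.add_apply, Pi.single_eq_of_ne hj, zero_add]
            constructor
            · intro h; exact ⟨hj, h⟩
            · intro h; exact h.2
        have hcard' : (univ.filter fun i => c' i ≠ x i).card = k := by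
          rw [hfil, Finset.card_erase_of_mem hi0mem, hc]
          omega
        exact ih c' hcard' (hallmax i0)
  have hM0 : D ymax = 0 :=
    claim _ ymax rfl rfl
  have hy0 : D y0 = 0 :=
    le_antisymm (hM0 ▸ hmax y0 (mem_univ y0)) (hDnn y0)
  have := sub_eq_zero.mp hy0
  exact ((ENNReal.toReal_eq_toReal_iff' (hne y0) (HH_ne_top x y0)).mp this.symm)

end maxprinciple

section counting

variable {m : ℕ}

noncomputable def cubeEquiv (m : ℕ) : (Fin m → ZMod 2) ≃ Finset (Fin m) where
  toFun z := univ.filter fun i => z i = 1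
  invFun S := fun i => if i ∈ S then 1 else 0
  left_inv z := by
    funext i
    by_cases h : z i = 1
    · simp [h]
    · have h0 : z i = 0 := zmod2_not_one _ h
      simp [h, h0]
  right_inv S := by
    ext i
    simp

lemma sum_wt_univ (f : ℕ → ℝ≥0∞) :
    ∑ z : Fin m → ZMod 2, f (wt z)
      = ∑ j ∈ Finset.range (m + 1), (m.choose j : ℝ≥0∞) * f j := by
  have e1 : ∑ z : Fin m → ZMod 2, f (wt z) = ∑ S : Finset (Fin m), f S.card :=
    Fintype.sum_equiv (cubeEquiv m) _ _ (fun z => rfl)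
  rw [e1]
  rw [show (univ : Finset (Finset (Fin m))) = (univ : Finset (Fin m)).powerset from
    Finset.powerset_univ.symm]
  rw [Finset.sum_powerset]
  rw [show ((univ : Finset (Fin m)).card) = m from by simp]
  refine Finset.sum_congr rfl fun j hj => ?_
  have e2 : ∑ t ∈ Finset.powersetCard j univ, f t.card
      = ∑ _t ∈ Finset.powersetCard j (univ : Finset (Fin m)), f j :=
    Finset.sum_congr rfl (fun t ht => by rw [(Finset.mem_powersetCard.mp ht).2])
  rw [e2, Finset.sum_const, Finset.card_powersetCard, nsmul_eq_mul]
  congr 2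
  simp

lemma sum_inv_wt_le : ∑ z : Fin m → ZMod 2, ((2 * (m+1) : ℕ) : ℝ≥0∞) / ((wt z + 1 : ℕ)) ≤
    2 * 2 ^ (m + 1) := by
  rw [sum_wt_univ (fun k => ((2 * (m+1) : ℕ) : ℝ≥0∞) / ((k + 1 : ℕ)))]
  have hterm : ∀ j ∈ Finset.range (m+1), (m.choose j : ℝ≥0∞) * (((2 * (m+1) : ℕ) : ℝ≥0∞) / ((j + 1 : ℕ)))
      = 2 * (((m+1).choose (j+1) : ℕ) : ℝ≥0∞) := by
    intro j _
    have h : (m+1) * m.choose j = (m+1).choose (j+1) * (j+1) := by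
      simpa [Nat.succ_eq_add_one] using Nat.add_one_mul_choose_eq m j
    have hnat : m.choose j * (2 * (m+1)) = (2 * ((m+1).choose (j+1))) * (j+1) := by
      calc m.choose j * (2 * (m+1)) = 2 * ((m+1) * m.choose j) := by ring
        _ = 2 * ((m+1).choose (j+1) * (j+1)) := by rw [h]
        _ = (2 * ((m+1).choose (j+1))) * (j+1) := by ring
    calc (m.choose j : ℝ≥0∞) * (((2 * (m+1) : ℕ) : ℝ≥0∞) / ((j + 1 : ℕ) : ℝ≥0∞))
        = ((m.choose j * (2 * (m+1)) : ℕ) : ℝ≥0∞) / ((j + 1 : ℕ) : ℝ≥0∞) := by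
          rw [← mul_div_assoc, ← Nat.cast_mul]
      _ = ((2 * ((m+1).choose (j+1)) * (j+1) : ℕ) : ℝ≥0∞) / ((j + 1 : ℕ) : ℝ≥0∞) := by
          rw [hnat]
      _ = 2 * (((m+1).choose (j+1) : ℕ) : ℝ≥0∞) := by
          rw [Nat.cast_mul, mul_div_assoc,
            ENNReal.div_self (by exact_mod_cast Nat.succ_ne_zero j) (by simp), mul_one,
            Nat.cast_mul]
          try norm_num
  rw [Finset.sum_congr rfl hterm, ← Finset.mul_sum]
  have hch : ∑ j ∈ Finset.range (m+1), (((m+1).choose (j+1) : ℕ) : ℝ≥0∞)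
      = ((∑ j ∈ Finset.range (m+1), (m+1).choose (j+1) : ℕ) : ℝ≥0∞) := by
    push_cast
    try rfl
  rw [hch]
  have hnatsum : (∑ j ∈ Finset.range (m+1), (m+1).choose (j+1)) ≤ 2 ^ (m+1) := by
    have h := Nat.sum_range_choose (m+1)
    rw [Finset.sum_range_succ'] at h
    omega
  calc 2 * ((∑ j ∈ Finset.range (m+1), (m+1).choose (j+1) : ℕ) : ℝ≥0∞)
      ≤ 2 * ((2 ^ (m+1) : ℕ) : ℝ≥0∞) := by
        have hcast : ((∑ j ∈ Finset.range (m+1), (m+1).choose (j+1) : ℕ) : ℝ≥0∞)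
            ≤ ((2 ^ (m+1) : ℕ) : ℝ≥0∞) := by exact_mod_cast hnatsum
        exact mul_le_mul_right hcast 2
    _ = 2 * 2 ^ (m+1) := by push_cast; try ring

end counting

/-- **All hitting times on the hypercube are of order `2^m`.** There are universal
constants `c, C > 0` such that for every `m ≥ 1` and every nonzero `x ∈ ℤ_2^m`,
`c 2^m ≤ E_0[τ_x] ≤ C 2^m` for the standard-generator random walk. -/
theorem statement11 :
    ∃ c C : NNReal, 0 < c ∧ 0 < C ∧
      ∀ m : ℕ, 1 ≤ m → ∀ x : Fin m → ZMod 2, x ≠ 0 →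
        (c : ℝ≥0∞) * 2 ^ m ≤
            expHit (fun y : Fin m → ZMod 2 =>
              if ∃ i, y = Pi.single i 1 then (m : ℝ≥0∞)⁻¹ else 0) 0 x ∧
          expHit (fun y : Fin m → ZMod 2 =>
              if ∃ i, y = Pi.single i 1 then (m : ℝ≥0∞)⁻¹ else 0) 0 x ≤
            (C : ℝ≥0∞) * 2 ^ m := by
  refine ⟨2⁻¹, 4, by norm_num, by norm_num, ?_⟩
  intro m hm x hx
  have hm0 : m ≠ 0 := by omega
  have hp : (fun y : Fin m → ZMod 2 =>
      if ∃ i, y = Pi.single i 1 then (m : ℝ≥0∞)⁻¹ else 0) = pp m := rfl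
  rw [hp, expHit_eq_HH hm0 x 0]
  have hHH0 : HH m x 0 = ∑ z ∈ univ.filter (fun z : Fin m → ZMod 2 => dot z x = 1),
      (m : ℝ≥0∞) / (wt z) := by
    unfold HH
    rw [add_zero]
  rw [hHH0]
  constructor
  · -- lower bound
    have hterm : ∀ z ∈ univ.filter (fun z : Fin m → ZMod 2 => dot z x = 1),
        (1:ℝ≥0∞) ≤ (m : ℝ≥0∞) / (wt z) := by
      intro z hz
      have hz0 : z ≠ 0 := dot_one_ne_zero (mem_filter.mp hz).2
      have hwt : (wt z : ℝ≥0∞) ≠ 0 := by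
        rw [Ne, Nat.cast_eq_zero]
        exact fun h => hz0 ((wt_eq_zero_iff z).mp h)
      calc (1:ℝ≥0∞) = (wt z : ℝ≥0∞) / (wt z) := (ENNReal.div_self hwt (by simp)).symm
        _ ≤ (m : ℝ≥0∞) / (wt z) := ENNReal.div_le_div (by exact_mod_cast wt_le z) le_rfl
    have hsum := Finset.card_nsmul_le_sum
      (univ.filter (fun z : Fin m → ZMod 2 => dot z x = 1))
      (fun z => (m : ℝ≥0∞) / (wt z)) 1 hterm
    rw [card_dot_one hm0 x hx, nsmul_eq_mul, mul_one] at hsum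
    calc ((2⁻¹ : NNReal) : ℝ≥0∞) * 2 ^ m = ((2 ^ (m-1) : ℕ) : ℝ≥0∞) := by
          rw [show ((2⁻¹ : NNReal) : ℝ≥0∞) = (2:ℝ≥0∞)⁻¹ from by
            rw [ENNReal.coe_inv (by norm_num)]; norm_num]
          rw [show (2:ℝ≥0∞)^m = 2^(m-1) * 2 from by rw [← pow_succ]; congr 1; omega]
          rw [mul_comm ((2:ℝ≥0∞)^(m-1)) 2, ← mul_assoc,
            ENNReal.inv_mul_cancel (by norm_num) ENNReal.ofNat_ne_top, one_mul]
          push_cast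
          rfl
      _ ≤ _ := hsum
  · -- upper bound
    have hterm2 : ∀ z ∈ univ.filter (fun z : Fin m → ZMod 2 => dot z x = 1),
        (m : ℝ≥0∞) / (wt z) ≤ ((2 * (m+1) : ℕ) : ℝ≥0∞) / ((wt z + 1 : ℕ)) := by
      intro z hz
      have hz0 : z ≠ 0 := dot_one_ne_zero (mem_filter.mp hz).2
      have hwtn : wt z ≠ 0 := fun h => hz0 ((wt_eq_zero_iff z).mp h)
      have hwt : (wt z : ℝ≥0∞) ≠ 0 := by rwa [Ne, Nat.cast_eq_zero]
      refine (ENNReal.le_div_iff_mul_le (Or.inl ?_) (Or.inl ?_)).mpr ?_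
      · exact_mod_cast Nat.succ_ne_zero (wt z)
      · simp
      · calc (m : ℝ≥0∞) / (wt z) * ((wt z + 1 : ℕ) : ℝ≥0∞)
            = (m : ℝ≥0∞) / (wt z) * ((wt z : ℝ≥0∞) + 1) := by push_cast; try rfl
          _ = (m : ℝ≥0∞) + (m : ℝ≥0∞) / (wt z) := by
              rw [mul_add, ENNReal.div_mul_cancel hwt (by simp), mul_one]
          _ ≤ (m : ℝ≥0∞) + (m : ℝ≥0∞) := by
              refine add_le_add le_rfl ?_
              calc (m : ℝ≥0∞) / (wt z) ≤ (m : ℝ≥0∞) / 1 :=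
                    ENNReal.div_le_div le_rfl (by exact_mod_cast Nat.one_le_iff_ne_zero.mpr hwtn)
                _ = (m : ℝ≥0∞) := by rw [div_one]
          _ ≤ ((2 * (m+1) : ℕ) : ℝ≥0∞) := by
              rw [show ((2 * (m+1) : ℕ) : ℝ≥0∞) = (m:ℝ≥0∞) + m + 2 from by push_cast; ring]
              exact le_self_add
    calc ∑ z ∈ univ.filter (fun z : Fin m → ZMod 2 => dot z x = 1), (m : ℝ≥0∞) / (wt z)
        ≤ ∑ z ∈ univ.filter (fun z : Fin m → ZMod 2 => dot z x = 1),
            ((2 * (m+1) : ℕ) : ℝ≥0∞) / ((wt z + 1 : ℕ)) := Finset.sum_le_sum hterm2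
      _ ≤ ∑ z : Fin m → ZMod 2, ((2 * (m+1) : ℕ) : ℝ≥0∞) / ((wt z + 1 : ℕ)) :=
          Finset.sum_le_sum_of_subset (Finset.filter_subset _ _)
      _ ≤ 2 * 2 ^ (m + 1) := sum_inv_wt_le
      _ = ((4 : NNReal) : ℝ≥0∞) * 2 ^ m := by
          rw [pow_succ]
          rw [show ((4 : NNReal) : ℝ≥0∞) = 4 from by norm_num]
          ring
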